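/- arXiv:2003.06018 — 2 statements merged into one kernel-verified Lean document; each statement's English description precedes it below -/
import Mathlib

section
/- Let d ∈ ℝ^n be strictly positive and let B₀ ∈ ℝ^{n×n} satisfy: columns of B₀ sum to zero, off-diagonal entries of B₀ are nonpositive, and B₀ d = 0. Then for every x₀ ∈ ℝ^n and every t ≥ 0, exp(−t B₀) x₀ ≺_d x₀. -/
/-
The matrix `M = -(t • B₀)` has zero column sums and nonnegative off-diagonal entries, and
`M *ᵥ d = 0`. A vector killed by `M` is fixed by `exp M`: all higher terms of the exponential
series vanish on it. Applied to `d`, and to the all-ones vector for `Mᵀ`, this gives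
`exp M *ᵥ d = d` and unit column sums. For nonnegativity, `M + c • 1` is entrywise nonnegative
for `c` large, so its exponential is a series of nonnegative matrices, and
`exp M = Real.exp (-c) • exp (M + c • 1)`.
-/

open Matrix Finset

def ColStoch {n : ℕ} (A : Matrix (Fin n) (Fin n) ℝ) : Prop :=
  (∀ i j, 0 ≤ A i j) ∧ ∀ j, ∑ i, A i j = 1

def dMaj {n : ℕ} (d x y : Fin n → ℝ) : Prop :=
  ∃ A : Matrix (Fin n) (Fin n) ℝ, ColStoch A ∧ A.mulVec d = d ∧ A.mulVec y = x

open NormedSpace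
open scoped Nat

theorem NormedSpace.exp_mul_of_mul_eq_zero {𝔸 : Type*} [NormedRing 𝔸] [NormedAlgebra ℚ 𝔸]
    [CompleteSpace 𝔸] {a b : 𝔸} (h : a * b = 0) : exp a * b = b := by
  have hterm : ∀ k ≠ 0, ((k ! : ℚ)⁻¹ • a ^ k) * b = 0 := by
    rintro (_ | k) hk
    · contradiction
    · rw [smul_mul_assoc, pow_succ, mul_assoc, h, mul_zero, smul_zero]
  exact ((exp_series_hasSum_exp' (𝕂 := ℚ) a).mul_right b).unique
    (by simpa using hasSum_single 0 hterm)

namespace Matrix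

variable {m 𝕜 : Type*} [Fintype m] [DecidableEq m] [RCLike 𝕜]

theorem exp_mulVec_of_mulVec_eq_zero {M : Matrix m m 𝕜} {v : m → 𝕜} (h : M *ᵥ v = 0) :
    exp M *ᵥ v = v := by
  have hcol : exp M * replicateCol m v = replicateCol m v :=
    -- any Banach algebra norm on matrices will do; `exp` itself does not depend on it
    open scoped Norms.Operator in
    exp_mul_of_mul_eq_zero (by rw [← replicateCol_mulVec, h, replicateCol_zero])
  rw [← replicateCol_mulVec] at hcol
  funext i
  exact congrFun (congrFun hcol i) i

theorem sum_exp_apply_eq_one {M : Matrix m m 𝕜} (h : ∀ j, ∑ i, M i j = 0) (j : m) :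
    ∑ i, exp M i j = 1 := by
  have hfix : Mᵀ *ᵥ (fun _ => 1) = 0 := by
    funext j
    simpa [mulVec, dotProduct] using h j
  have := congrFun (exp_mulVec_of_mulVec_eq_zero hfix) j
  simpa [exp_transpose, mulVec, dotProduct] using this

theorem exp_smul_one (c : ℝ) : exp (c • (1 : Matrix m m ℝ)) = Real.exp c • 1 := by
  rw [smul_one_eq_diagonal, exp_diagonal, Pi.exp_def, ← Real.exp_eq_exp_ℝ, smul_one_eq_diagonal]

theorem exp_apply_nonneg_of_nonneg {M : Matrix m m ℝ} (h : ∀ i j, 0 ≤ M i j) (i j : m) :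
    0 ≤ exp M i j := by
  have hpow : ∀ k i j, 0 ≤ (M ^ k) i j := by
    intro k
    induction k with
    | zero =>
      intro i j
      rw [pow_zero, one_apply]
      split_ifs <;> norm_num
    | succ k ih =>
      intro i j
      rw [pow_succ, mul_apply]
      exact sum_nonneg fun l _ => mul_nonneg (ih i l) (h l j)
  have hsum := open scoped Norms.Operator in exp_series_hasSum_exp' (𝕂 := ℝ) M
  exact (Pi.hasSum.mp (Pi.hasSum.mp hsum i) j).nonneg
    fun k => mul_nonneg (by positivity) (hpow k i j)

theorem exp_apply_nonneg_of_offDiag_nonneg {M : Matrix m m ℝ}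
    (h : ∀ i j, i ≠ j → 0 ≤ M i j) (i j : m) : 0 ≤ exp M i j := by
  set c := ∑ k, |M k k|
  have hshift : ∀ i j, 0 ≤ (M + c • 1) i j := by
    intro i j
    rcases eq_or_ne i j with rfl | hij
    · have hdiag : |M i i| ≤ c :=
        single_le_sum (f := fun k => |M k k|) (fun k _ => abs_nonneg _) (mem_univ i)
      simp only [add_apply, smul_apply, one_apply_eq, smul_eq_mul, mul_one]
      linarith [neg_abs_le (M i i)]
    · simpa [one_apply_ne hij] using h i j hij
  have hexp : exp M = Real.exp (-c) • exp (M + c • 1) := by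
    rw [exp_add_of_commute _ _ ((Commute.one_right M).smul_right c), exp_smul_one, mul_smul_comm,
      mul_one, smul_smul, ← Real.exp_add, neg_add_cancel, Real.exp_zero, one_smul]
  rw [hexp, smul_apply, smul_eq_mul]
  exact mul_nonneg (Real.exp_nonneg _) (exp_apply_nonneg_of_nonneg hshift i j)

end Matrix

theorem colStoch_exp {n : ℕ} {M : Matrix (Fin n) (Fin n) ℝ} (hcol : ∀ j, ∑ i, M i j = 0)
    (hoff : ∀ i j, i ≠ j → 0 ≤ M i j) : ColStoch (exp M) :=
  ⟨exp_apply_nonneg_of_offDiag_nonneg hoff, sum_exp_apply_eq_one hcol⟩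

theorem stmt11_general {n : ℕ} (d : Fin n → ℝ)
    (B₀ : Matrix (Fin n) (Fin n) ℝ)
    (hcol : ∀ j, ∑ i, B₀ i j = 0) (hoff : ∀ i j, i ≠ j → B₀ i j ≤ 0)
    (hfix : B₀.mulVec d = 0) (x₀ : Fin n → ℝ) (t : ℝ) (ht : 0 ≤ t) :
    dMaj d ((NormedSpace.exp (-(t • B₀))).mulVec x₀) x₀ := by
  refine ⟨exp (-(t • B₀)), colStoch_exp (fun j => ?_) (fun i j hij => ?_),
    exp_mulVec_of_mulVec_eq_zero ?_, rfl⟩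
  · simp [← Finset.mul_sum, hcol j]
  · simpa using mul_nonneg ht (neg_nonneg.mpr (hoff i j hij))
  · rw [neg_mulVec, smul_mulVec, hfix, smul_zero, neg_zero]

theorem stmt11 {n : ℕ} (d : Fin n → ℝ) (hd : ∀ i, 0 < d i)
    (B₀ : Matrix (Fin n) (Fin n) ℝ)
    (hcol : ∀ j, ∑ i, B₀ i j = 0) (hoff : ∀ i j, i ≠ j → B₀ i j ≤ 0)
    (hfix : B₀.mulVec d = 0) (x₀ : Fin n → ℝ) (t : ℝ) (ht : 0 ≤ t) :
    dMaj d ((NormedSpace.exp (-(t • B₀))).mulVec x₀) x₀ :=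
  stmt11_general d B₀ hcol hoff hfix x₀ t ht
end

section
/- The set {x ∈ ℝ^n | x ≺_d y} is a polytope: it equals the set {Ay | A column stochastic, Ad = d}, which is the image of a compact convex polytope of matrices under a linear map, hence is itself a compact convex polytope (convex hull of finitely many points). -/
/-!
The column-stochastic matrices fixing `d` form a polyhedron in standard form
`{A | A ≥ 0, linear equalities}`. An extreme point `v` of such a polyhedron is determined by its
zero pattern: any other point `w` vanishing wherever `v` does would put `v` in the interior of a
segment `[w, v + t (v - w)]` inside the polyhedron. So there are finitely many extreme points, and
since the polyhedron is compact, Krein–Milman makes it the convex hull of that finite set. The set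
`{x | x ≺_d y}` is its image under the linear map `A ↦ A y`, hence again the convex hull of a
finite set.
-/

open Matrix Finset

open scoped Topology

section StdFormPolyhedron

variable {ι E F : Type*} [AddCommGroup E] [Module ℝ E] [AddCommGroup F] [Module ℝ F]

def stdFormPolyhedron (f : ι → E →ₗ[ℝ] ℝ) (g : E →ₗ[ℝ] F) (c : F) : Set E :=
  {x | (∀ i, 0 ≤ f i x) ∧ g x = c}

variable {f : ι → E →ₗ[ℝ] ℝ} {g : E →ₗ[ℝ] F} {c : F}

theorem convex_stdFormPolyhedron : Convex ℝ (stdFormPolyhedron f g c) := by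
  rintro x ⟨hx, hxc⟩ y ⟨hy, hyc⟩ a b ha hb hab
  refine ⟨fun i => ?_, ?_⟩
  · simp only [map_add, map_smul, smul_eq_mul]
    exact add_nonneg (mul_nonneg ha (hx i)) (mul_nonneg hb (hy i))
  · rw [map_add, map_smul, map_smul, hxc, hyc, ← add_smul, hab, one_smul]

theorem isClosed_stdFormPolyhedron [TopologicalSpace E] [IsTopologicalAddGroup E]
    [ContinuousSMul ℝ E] [T2Space E] [FiniteDimensional ℝ E] [TopologicalSpace F]
    [IsTopologicalAddGroup F] [ContinuousSMul ℝ F] [T2Space F] :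
    IsClosed (stdFormPolyhedron f g c) := by
  simp only [stdFormPolyhedron, Set.ofPred_and, Set.ofPred_forall]
  exact (isClosed_iInter fun i => isClosed_le continuous_const
    (f i).continuous_of_finiteDimensional).inter
    (isClosed_eq g.continuous_of_finiteDimensional continuous_const)

theorem eq_of_mem_extremePoints_stdFormPolyhedron [Finite ι] {v w : E}
    (hv : v ∈ (stdFormPolyhedron f g c).extremePoints ℝ) (hw : w ∈ stdFormPolyhedron f g c)
    (hvw : ∀ i, f i v = 0 → f i w = 0) : w = v := by
  have hv0 := hv.1.1
  have : ∀ᶠ t in 𝓝[>] (0 : ℝ), ∀ i, 0 ≤ f i v + t * (f i v - f i w) := by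
    refine Filter.eventually_all.2 fun i => ?_
    rcases (hv0 i).eq_or_lt with hzero | hpos
    · refine Filter.Eventually.of_forall fun t => ?_
      simp [← hzero, hvw i hzero.symm]
    · have hcont : Continuous fun t : ℝ => f i v + t * (f i v - f i w) := by fun_prop
      exact nhdsWithin_le_nhds
        ((hcont.tendsto' 0 (f i v) (by simp)).eventually (Ici_mem_nhds hpos))
  obtain ⟨t, ht, htpos⟩ := (this.and self_mem_nhdsWithin).exists
  set u := v + t • (v - w)
  have hu : u ∈ stdFormPolyhedron f g c := by
    refine ⟨fun i => by simpa [u, mul_sub] using ht i, ?_⟩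
    simp [u, hv.1.2, hw.2]
  have hmem : v ∈ openSegment ℝ w u := by
    refine ⟨t / (t + 1), 1 / (t + 1), by positivity, by positivity, by field_simp, ?_⟩
    simp only [u]
    match_scalars <;> field_simp <;> ring
  exact hv.2 hw hu hmem

theorem finite_extremePoints_stdFormPolyhedron [Finite ι] :
    ((stdFormPolyhedron f g c).extremePoints ℝ).Finite :=
  Set.Finite.of_finite_image (f := fun v => {i | f i v = 0}) (Set.toFinite _)
    fun _ hv _ hw h => (eq_of_mem_extremePoints_stdFormPolyhedron hv hw.1
      fun i hi => (congrArg (i ∈ ·) h).mp hi).symm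

theorem exists_finset_stdFormPolyhedron_eq_convexHull [Finite ι] [TopologicalSpace E]
    [T2Space E] [IsTopologicalAddGroup E] [ContinuousSMul ℝ E] [LocallyConvexSpace ℝ E]
    (hK : IsCompact (stdFormPolyhedron f g c)) :
    ∃ t : Finset E, stdFormPolyhedron f g c = convexHull ℝ ↑t := by
  have hfin := finite_extremePoints_stdFormPolyhedron (f := f) (g := g) (c := c)
  refine ⟨hfin.toFinset, ?_⟩
  rw [hfin.coe_toFinset]
  exact (closure_convexHull_extremePoints hK convex_stdFormPolyhedron).symm.trans
    (hfin.isClosed_convexHull ℝ).closure_eq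

end StdFormPolyhedron

instance Matrix.instLocallyConvexSpaceReal {m n : Type*} :
    LocallyConvexSpace ℝ (Matrix m n ℝ) :=
  inferInstanceAs (LocallyConvexSpace ℝ (m → n → ℝ))

variable {n : ℕ}

theorem ColStoch.le_one {A : Matrix (Fin n) (Fin n) ℝ} (hA : ColStoch A) (i j : Fin n) :
    A i j ≤ 1 :=
  hA.2 j ▸ single_le_sum (fun k _ => hA.1 k j) (mem_univ i)

/-- `vecMulBilin ℝ ℝ 1 A = 1 ᵥ* A` is the vector of column sums of `A`. -/
theorem setOf_colStoch_mulVec_eq_stdFormPolyhedron (d : Fin n → ℝ) :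
    {A : Matrix (Fin n) (Fin n) ℝ | ColStoch A ∧ A *ᵥ d = d} =
      stdFormPolyhedron (fun p : Fin n × Fin n => entryLinearMap ℝ ℝ p.1 p.2)
        ((vecMulBilin ℝ ℝ 1).prod ((mulVecBilin ℝ ℝ).flip d)) (1, d) := by
  ext A
  simp [stdFormPolyhedron, ColStoch, funext_iff, vecMul, dotProduct, vecMulBilin_apply, and_assoc]

theorem isCompact_setOf_colStoch_mulVec_eq (d : Fin n → ℝ) :
    IsCompact {A : Matrix (Fin n) (Fin n) ℝ | ColStoch A ∧ A *ᵥ d = d} := by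
  have hbox : IsCompact (Set.univ.pi fun _ => Set.univ.pi fun _ => Set.Icc (0 : ℝ) 1 :
      Set (Matrix (Fin n) (Fin n) ℝ)) :=
    isCompact_univ_pi fun _ => isCompact_univ_pi fun _ => isCompact_Icc
  have hclosed : IsClosed {A : Matrix (Fin n) (Fin n) ℝ | ColStoch A ∧ A *ᵥ d = d} := by
    rw [setOf_colStoch_mulVec_eq_stdFormPolyhedron]
    exact isClosed_stdFormPolyhedron
  exact hbox.of_isClosed_subset hclosed fun A hA i _ j _ => ⟨hA.1.1 i j, hA.1.le_one i j⟩

theorem setOf_dMaj_eq_image (d y : Fin n → ℝ) :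
    {x | dMaj d x y} =
      (mulVecBilin ℝ ℝ).flip y '' {A : Matrix (Fin n) (Fin n) ℝ | ColStoch A ∧ A *ᵥ d = d} := by
  ext x
  simp [dMaj, mulVecBilin_apply, and_assoc]

theorem stmt14_general {n : ℕ} (d y : Fin n → ℝ) :
    {x : Fin n → ℝ | dMaj d x y} =
        {x | ∃ A : Matrix (Fin n) (Fin n) ℝ, ColStoch A ∧ A.mulVec d = d ∧ x = A.mulVec y} ∧
      IsCompact {x : Fin n → ℝ | dMaj d x y} ∧
      Convex ℝ {x : Fin n → ℝ | dMaj d x y} ∧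
      ∃ s : Finset (Fin n → ℝ),
        {x : Fin n → ℝ | dMaj d x y} = convexHull ℝ (s : Set (Fin n → ℝ)) := by
  obtain ⟨t, ht⟩ := exists_finset_stdFormPolyhedron_eq_convexHull
    (setOf_colStoch_mulVec_eq_stdFormPolyhedron d ▸ isCompact_setOf_colStoch_mulVec_eq d)
  have hpoly : {x | dMaj d x y} = convexHull ℝ ↑(t.image ((mulVecBilin ℝ ℝ).flip y)) := by
    rw [setOf_dMaj_eq_image, setOf_colStoch_mulVec_eq_stdFormPolyhedron, ht,
      LinearMap.image_convexHull, coe_image]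
  refine ⟨?_, ?_, ?_, _, hpoly⟩
  · simp only [dMaj, eq_comm]
  · rw [hpoly]
    exact (Finset.finite_toSet _).isCompact_convexHull ℝ
  · rw [hpoly]
    exact convex_convexHull ℝ _

theorem stmt14 {n : ℕ} (d y : Fin n → ℝ) (hd : ∀ i, 0 < d i) :
    {x : Fin n → ℝ | dMaj d x y} =
        {x | ∃ A : Matrix (Fin n) (Fin n) ℝ, ColStoch A ∧ A.mulVec d = d ∧ x = A.mulVec y} ∧
      IsCompact {x : Fin n → ℝ | dMaj d x y} ∧
      Convex ℝ {x : Fin n → ℝ | dMaj d x y} ∧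
      ∃ s : Finset (Fin n → ℝ),
        {x : Fin n → ℝ | dMaj d x y} = convexHull ℝ (s : Set (Fin n → ℝ)) :=
  stmt14_general d y
end
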